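/- Let F = F_4 = F_2(ω) where ω² + ω + 1 = 0, and let R = F[x]/(x⁵ − ω). Let C be the F[x]-submodule of R × R generated by the single element g = (x + x² + x³ + ω²x⁴, 1 + ωx² + ωx³ + ω²x⁴). Then, identifying R × R with F^10 blockwise via coefficients: (i) dim_F C = 5; (ii) C ∩ C^⊥ = {0}, i.e., C is LCD; and (iii) π_1(C) = π_2(C) = R, i.e., both projections are the unit ideal (equivalently, gcd(x + x² + x³ + ω²x⁴, x⁵ − ω) = 1 and gcd(1 + ωx² + ωx³ + ω²x⁴, x⁵ − ω) = 1 in F[x]). In particular the pairwise-coprimality hypothesis (x⁵ − ω)/g_1 coprime to (x⁵ − ω)/g_2 fails for C, yet C is LCD, so that hypothesis is sufficient but not necessary for an MT code to be LCD. -/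

import Mathlib

/-!
Modulo `x⁵ - ω`, where `ω² = ω + 1` and `2 = 0`, the first component `g₁` of the generator is a
unit and `g₂ = σ g₁` with `σ = ω² + ω²x² + ωx³ + ωx⁴`. Hence `C = {(r, σ r) : r ∈ R}` is the
graph of multiplication by `σ`: it has dimension `dim R = 5`, and both projections are onto
because `g₁` and `g₂` are units. In coefficients, with `S` the matrix of multiplication by `σ`,
a codeword `(u, S u)` orthogonal to every `(c, S c)` satisfies `(1 + Sᵀ S) u = 0`, and
`1 + Sᵀ S` is invertible over `𝔽₄` (Massey's criterion for the generator matrix `(1; S)`).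
-/

open Polynomial

variable (F : Type*) [Field F] (ω : F)

/-- The block polynomial `x⁵ − ω`. -/
noncomputable def fpoly : Polynomial F := X ^ 5 - Polynomial.C ω

/-- The block ring `R = F[x]/(x⁵ − ω)`. -/
noncomputable abbrev R := Polynomial F ⧸ Ideal.span {fpoly F ω}

/-- The generator `g = (x + x² + x³ + ω²x⁴, 1 + ωx² + ωx³ + ω²x⁴)` of `C`. -/
noncomputable def gel : R F ω × R F ω :=
  (Ideal.Quotient.mk _ (X + X ^ 2 + X ^ 3 + Polynomial.C (ω ^ 2) * X ^ 4),
   Ideal.Quotient.mk _ (1 + Polynomial.C ω * X ^ 2 + Polynomial.C ω * X ^ 3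
      + Polynomial.C (ω ^ 2) * X ^ 4))

/-- The code `C`: the `F[x]`-submodule of `R × R` generated by `g`. -/
noncomputable def Ccode : Submodule (Polynomial F) (R F ω × R F ω) :=
  Submodule.span (Polynomial F) {gel F ω}

/-- The blockwise coefficient identification of `F¹⁰` with `R × R`. -/
noncomputable def blk (a : Fin 10 → F) : R F ω × R F ω :=
  (Ideal.Quotient.mk _
      (∑ k : Fin 5, Polynomial.C (a ⟨(k : ℕ), by have := k.isLt; omega⟩) * X ^ (k : ℕ)),
   Ideal.Quotient.mk _
      (∑ k : Fin 5, Polynomial.C (a ⟨5 + (k : ℕ), by have := k.isLt; omega⟩) * X ^ (k : ℕ)))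

theorem two_eq_zero_of_card_eq_four {K : Type*} [Field K] [Fintype K]
    (hcard : Fintype.card K = 4) : (2 : K) = 0 := by
  have h4 := FiniteField.cast_card_eq_zero K
  rw [hcard] at h4
  exact mul_self_eq_zero.mp (by linear_combination h4)

open Matrix in
theorem Matrix.eq_zero_of_orthogonal_to_graph {K n : Type*} [Field K] [Fintype n] [DecidableEq n]
    {S : Matrix n n K} (hS : IsUnit (1 + Sᵀ * S)) {u : n → K}
    (h : ∀ c, u ⬝ᵥ c + (S *ᵥ u) ⬝ᵥ (S *ᵥ c) = 0) : u = 0 := by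
  have hker : (1 + Sᵀ * S) *ᵥ u = 0 := dotProduct_eq_zero _ fun c => by
    rw [add_mulVec, one_mulVec, add_dotProduct, ← mulVec_mulVec, dotProduct_comm (Sᵀ *ᵥ _),
      dotProduct_mulVec, vecMul_transpose, dotProduct_comm (S *ᵥ c)]
    exact h c
  exact mulVec_injective_iff_isUnit.2 hS (by rw [hker, mulVec_zero])

theorem Polynomial.coeff_sum_fin_C_mul_X_pow {A : Type*} [Semiring A] {n : ℕ} (c : Fin n → A)
    (j : Fin n) : (∑ i : Fin n, C (c i) * X ^ (i : ℕ)).coeff j = c j := by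
  simp [finsetSum_coeff, Fin.val_inj]

theorem Ideal.Quotient.mk_sum_fin_C_mul_X_pow_injective {K : Type*} [Field K] {f : K[X]} {n : ℕ}
    (hf : f.degree = n) :
    Function.Injective fun c : Fin n → K =>
      Ideal.Quotient.mk (Ideal.span {f}) (∑ i, C (c i) * X ^ (i : ℕ)) := by
  intro c c' h
  have hdvd : f ∣ ∑ i, C ((c - c') i) * X ^ (i : ℕ) := by
    simpa only [Pi.sub_apply, map_sub, sub_mul, Finset.sum_sub_distrib] using
      Ideal.mem_span_singleton.mp (Ideal.Quotient.eq.mp h)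
  have hzero := eq_zero_of_dvd_of_degree_lt hdvd (hf ▸ degree_sum_fin_lt _)
  funext j
  have hj := coeff_sum_fin_C_mul_X_pow (c - c') j
  rw [hzero, coeff_zero, Pi.sub_apply] at hj
  exact sub_eq_zero.mp hj.symm

theorem Ideal.Quotient.span_singleton_eq_top_of_isUnit {A : Type*} [CommRing A] {I : Ideal A}
    {a : A ⧸ I} (ha : IsUnit a) : Submodule.span A {a} = ⊤ := by
  rw [← Submodule.restrictScalars_span A (A ⧸ I) Ideal.Quotient.mk_surjective,
    Submodule.restrictScalars_eq_top_iff]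
  exact Ideal.span_singleton_eq_top.2 ha

theorem Ideal.Quotient.isCoprime_of_isUnit_mk {A : Type*} [CommRing A] {a f : A}
    (ha : IsUnit (Ideal.Quotient.mk (Ideal.span {f}) a)) : IsCoprime a f := by
  obtain ⟨b, hb⟩ := Ideal.Quotient.mk_surjective ha.unit⁻¹.val
  have hmk : Ideal.Quotient.mk (Ideal.span {f}) (b * a) = Ideal.Quotient.mk _ 1 := by
    rw [map_mul, hb, map_one, IsUnit.val_inv_mul]
  obtain ⟨q, hq⟩ := Ideal.mem_span_singleton'.mp (Ideal.Quotient.eq.mp hmk)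
  exact ⟨b, -q, by linear_combination -hq⟩

open Matrix in
theorem Fin.sum_append_mul_append {A : Type*} [NonUnitalNonAssocSemiring A] {m n : ℕ}
    (u u' : Fin m → A) (v v' : Fin n → A) :
    ∑ k, Fin.append u v k * Fin.append u' v' k = u ⬝ᵥ u' + v ⬝ᵥ v' := by
  simp only [Fin.sum_univ_add, Fin.append_left, Fin.append_right, dotProduct]

section Code

open Matrix

variable {F ω}

variable (ω) in
noncomputable def ofCoeffs (c : Fin 5 → F) : R F ω :=
  Ideal.Quotient.mk _ (∑ i, C (c i) * X ^ (i : ℕ))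

theorem ofCoeffs_injective : Function.Injective (ofCoeffs ω) :=
  Ideal.Quotient.mk_sum_fin_C_mul_X_pow_injective (by simp [fpoly, degree_X_pow_sub_C])

theorem blk_eq (a : Fin 10 → F) :
    blk F ω a = (ofCoeffs ω fun i => a (Fin.castAdd 5 i), ofCoeffs ω fun i => a (Fin.natAdd 5 i)) :=
  rfl

theorem blk_append (u v : Fin 5 → F) :
    blk F ω (Fin.append u v) = (ofCoeffs ω u, ofCoeffs ω v) := by
  simp only [blk_eq, Fin.append_left, Fin.append_right]

theorem ofCoeffs_eq (c : Fin 5 → F) :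
    ofCoeffs ω c = Ideal.Quotient.mk (Ideal.span {fpoly F ω}) (C (c 0) + C (c 1) * X +
      C (c 2) * X ^ 2 + C (c 3) * X ^ 3 + C (c 4) * X ^ 4) := by
  simp [ofCoeffs, Fin.sum_univ_five]

variable (ω) in
noncomputable def gelRatio : R F ω := ofCoeffs ω ![ω ^ 2, 0, ω ^ 2, ω, ω]

variable (ω) in
def gelRatioMatrix : Matrix (Fin 5) (Fin 5) F :=
  !![ω ^ 2, ω ^ 2, ω ^ 2, 1, 0;
     0, ω ^ 2, ω ^ 2, ω ^ 2, 1;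
     ω ^ 2, 0, ω ^ 2, ω ^ 2, ω ^ 2;
     ω, ω ^ 2, 0, ω ^ 2, ω ^ 2;
     ω, ω, ω ^ 2, 0, ω ^ 2]

variable (h2 : (2 : F) = 0) (hω : ω ^ 2 + ω + 1 = 0)
include h2 hω

theorem quotient_relations :
    (2 : R F ω) = 0 ∧
      (Ideal.Quotient.mk (Ideal.span {fpoly F ω}) (C ω)) ^ 2 +
        Ideal.Quotient.mk (Ideal.span {fpoly F ω}) (C ω) + 1 = 0 ∧
      (Ideal.Quotient.mk (Ideal.span {fpoly F ω}) X) ^ 5 =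
        Ideal.Quotient.mk (Ideal.span {fpoly F ω}) (C ω) := by
  let ι : F →+* R F ω := (Ideal.Quotient.mk _).comp C
  refine ⟨by simpa only [map_ofNat, map_zero] using congrArg ι h2, ?_, ?_⟩
  · have h := congrArg ι hω
    rw [map_add, map_add, map_pow, map_one, map_zero] at h
    exact h
  · rw [← map_pow, Ideal.Quotient.eq]
    exact Ideal.mem_span_singleton_self _

theorem isUnit_gel_fst : IsUnit (gel F ω).1 := by
  refine IsUnit.of_mul_eq_one (ofCoeffs ω ![ω, 1, ω ^ 2, ω ^ 2, 0]) ?_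
  obtain ⟨h2, hω, hx⟩ := quotient_relations h2 hω
  simp only [gel, ofCoeffs_eq, cons_val, map_add, map_mul, map_pow, map_one, map_zero]
  grind

theorem isUnit_gel_snd : IsUnit (gel F ω).2 := by
  refine IsUnit.of_mul_eq_one (ofCoeffs ω ![ω, 1, ω, 1, 0]) ?_
  obtain ⟨h2, hω, hx⟩ := quotient_relations h2 hω
  simp only [gel, ofCoeffs_eq, cons_val, map_add, map_mul, map_pow, map_one, map_zero]
  grind

theorem gel_snd_eq_gelRatio_mul_fst : (gel F ω).2 = gelRatio ω * (gel F ω).1 := by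
  obtain ⟨h2, hω, hx⟩ := quotient_relations h2 hω
  simp only [gel, gelRatio, ofCoeffs_eq, cons_val, map_add, map_mul, map_pow, map_one, map_zero]
  grind

theorem gelRatio_mul_ofCoeffs (c : Fin 5 → F) :
    gelRatio ω * ofCoeffs ω c = ofCoeffs ω (gelRatioMatrix ω *ᵥ c) := by
  obtain ⟨h2, hω, hx⟩ := quotient_relations h2 hω
  simp only [gelRatio, gelRatioMatrix, ofCoeffs_eq, cons_mulVec, empty_mulVec, dotProduct,
    Fin.sum_univ_five, cons_val, map_add, map_mul, map_pow, map_zero, map_one]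
  grind

theorem isUnit_one_add_transpose_mul_gelRatioMatrix :
    IsUnit (1 + (gelRatioMatrix ω)ᵀ * gelRatioMatrix ω) := by
  let N : Matrix (Fin 5) (Fin 5) F :=
    !![ω ^ 2, ω, 1, ω, ω;
       ω, 0, 0, ω, 1;
       1, 0, 1, ω, 0;
       ω, ω, ω, ω ^ 2, 0;
       ω, 1, 0, 0, 1]
  refine (isUnit_iff_isUnit_det _).2 (isUnit_det_of_left_inverse (B := N) ?_)
  ext i j
  fin_cases i <;> fin_cases j <;>
    simp only [N, gelRatioMatrix, mul_apply, Matrix.add_apply, Matrix.one_apply, transpose_apply,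
      of_apply, cons_val', cons_val_zero, cons_val_one, cons_val, cons_val_fin_one, Fin.isValue,
      Fin.reduceFinMk, Fin.mk_one, Fin.zero_eta, Fin.reduceEq, ↓reduceIte, Fin.sum_univ_five] <;>
    grind

theorem mem_Ccode_iff (p : R F ω × R F ω) : p ∈ Ccode F ω ↔ p.2 = gelRatio ω * p.1 := by
  have hsmul (q : F[X]) (r : R F ω) : q • r = Ideal.Quotient.mk _ q * r := Algebra.smul_def q r
  rw [Ccode, Submodule.mem_span_singleton]
  constructor
  · rintro ⟨q, rfl⟩
    rw [Prod.smul_fst, Prod.smul_snd, hsmul, hsmul, gel_snd_eq_gelRatio_mul_fst h2 hω]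
    ring
  · intro hp
    obtain ⟨q, hq⟩ := Ideal.Quotient.mk_surjective (p.1 * (isUnit_gel_fst h2 hω).unit⁻¹.val)
    have hfst : (q • gel F ω).1 = p.1 := by
      rw [Prod.smul_fst, hsmul, hq, mul_assoc, IsUnit.val_inv_mul, mul_one]
    refine ⟨q, Prod.ext hfst ?_⟩
    rw [Prod.smul_snd, gel_snd_eq_gelRatio_mul_fst h2 hω, ← mul_smul_comm, ← Prod.smul_fst, hfst,
      hp]

theorem finrank_Ccode : Module.finrank F (Submodule.restrictScalars F (Ccode F ω)) = 5 := by
  have hgraph : Submodule.restrictScalars F (Ccode F ω) =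
      LinearMap.range (LinearMap.id.prod (LinearMap.mulLeft F (gelRatio ω))) := by
    ext p
    simp [mem_Ccode_iff h2 hω, Prod.ext_iff, eq_comm]
  rw [hgraph, LinearMap.finrank_range_of_inj fun r r' h => congrArg Prod.fst h,
    finrank_quotient_span_eq_natDegree, fpoly, natDegree_X_pow_sub_C]

theorem eq_zero_of_blk_mem_Ccode_of_orthogonal (a : Fin 10 → F) (ha : blk F ω a ∈ Ccode F ω)
    (horth : ∀ b : Fin 10 → F, blk F ω b ∈ Ccode F ω → ∑ k : Fin 10, a k * b k = 0) : a = 0 := by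
  obtain ⟨u, v, rfl⟩ : ∃ u v : Fin 5 → F, a = Fin.append u v :=
    ⟨_, _, (Fin.append_castAdd_natAdd (m := 5) (n := 5)).symm⟩
  have hv : v = gelRatioMatrix ω *ᵥ u := by
    rw [blk_append, mem_Ccode_iff h2 hω, gelRatio_mul_ofCoeffs h2 hω] at ha
    exact ofCoeffs_injective ha
  have hu : u = 0 := by
    refine eq_zero_of_orthogonal_to_graph (isUnit_one_add_transpose_mul_gelRatioMatrix h2 hω)
      fun c => ?_
    have hc := horth (Fin.append c (gelRatioMatrix ω *ᵥ c)) (by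
      rw [blk_append, mem_Ccode_iff h2 hω, gelRatio_mul_ofCoeffs h2 hω])
    rwa [← hv, ← Fin.sum_append_mul_append]
  rw [hv, hu, mulVec_zero]
  exact Fin.append_castAdd_natAdd (f := (0 : Fin (5 + 5) → F))

theorem map_fst_Ccode :
    Submodule.map (LinearMap.fst F[X] (R F ω) (R F ω)) (Ccode F ω) = ⊤ := by
  rw [Ccode, Submodule.map_span, Set.image_singleton]
  exact Ideal.Quotient.span_singleton_eq_top_of_isUnit (isUnit_gel_fst h2 hω)

theorem map_snd_Ccode :
    Submodule.map (LinearMap.snd F[X] (R F ω) (R F ω)) (Ccode F ω) = ⊤ := by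
  rw [Ccode, Submodule.map_span, Set.image_singleton]
  exact Ideal.Quotient.span_singleton_eq_top_of_isUnit (isUnit_gel_snd h2 hω)

end Code

theorem stmt16 [Fintype F] (hcard : Fintype.card F = 4) (hω : ω ^ 2 + ω + 1 = 0) :
    -- (i) dim_F C = 5
    Module.finrank F (Submodule.restrictScalars F (Ccode F ω)) = 5 ∧
    -- (ii) C is LCD: C ∩ C^⊥ = {0}
    (∀ a : Fin 10 → F, blk F ω a ∈ Ccode F ω →
      (∀ b : Fin 10 → F, blk F ω b ∈ Ccode F ω → ∑ k : Fin 10, a k * b k = 0) →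
      a = 0) ∧
    -- (iii) both projections are the unit ideal …
    Submodule.map (LinearMap.fst (Polynomial F) (R F ω) (R F ω)) (Ccode F ω) = ⊤ ∧
    Submodule.map (LinearMap.snd (Polynomial F) (R F ω) (R F ω)) (Ccode F ω) = ⊤ ∧
    -- … equivalently, both components of g are coprime to x⁵ − ω
    IsCoprime (X + X ^ 2 + X ^ 3 + Polynomial.C (ω ^ 2) * X ^ 4) (fpoly F ω) ∧
    IsCoprime (1 + Polynomial.C ω * X ^ 2 + Polynomial.C ω * X ^ 3
        + Polynomial.C (ω ^ 2) * X ^ 4) (fpoly F ω) := by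
  have h2 := two_eq_zero_of_card_eq_four hcard
  exact ⟨finrank_Ccode h2 hω, eq_zero_of_blk_mem_Ccode_of_orthogonal h2 hω,
    map_fst_Ccode h2 hω, map_snd_Ccode h2 hω,
    Ideal.Quotient.isCoprime_of_isUnit_mk (isUnit_gel_fst h2 hω),
    Ideal.Quotient.isCoprime_of_isUnit_mk (isUnit_gel_snd h2 hω)⟩
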